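/- arXiv:0811.1169 — 6 statements merged into one kernel-verified Lean document; each statement's English description precedes it below -/
import Mathlib

section
/- Let μ ≥ 0, n ≥ 0 an integer, and let h : (0,∞) → ℝ be measurable with ∫₀^∞ h(y)² y^{2n+2} e^{μy} dy < ∞. Define H(y) = ∫_y^∞ h(x) dx. Then ∫₀^∞ H(y)² y^{2n} e^{μy} dy ≤ 4 ∫₀^∞ h(y)² y^{2n+2} e^{μy} dy. -/
/-!
Write the weights as `y^p w(y)` and `y^(p+2) w(y)` with `p = 2n` and `w(y) = e^(μy)`, which is
positive and nondecreasing, and put `β = (p + 1) / 2`. Cauchy–Schwarz with the weight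
`x^(β+1) w(x)` gives `H(y)² ≤ T(y) · ∫_y^∞ x^(-β-1) / w(x) dx`, where
`T(y) = ∫_y^∞ h² x^(β+1) w`, and since `w ≥ w(y)` on `(y, ∞)` the last integral is at most
`y^(-β) / (β w(y))`. Hence `H(y)² y^p w(y) ≤ T(y) y^(β-1) / β`. Integrating in `y` and swapping
the order of integration, `∫_0^x y^(β-1) dy = x^β / β` turns this into `1 / β²` times
`∫ h² x^(p+2) w`, and `1 / β² = (2 / (p + 1))² ≤ 4`.
-/

open MeasureTheory Real Set
open scoped ENNReal

theorem lintegral_sq_le_lintegral_sq_mul_mul_lintegral_inv {α : Type*} [MeasurableSpace α]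
    {μ : Measure α} {f φ : α → ℝ≥0∞} (hf : AEMeasurable f μ) (hφ : AEMeasurable φ μ)
    (hφ_ne_zero : ∀ᵐ x ∂μ, φ x ≠ 0) (hφ_ne_top : ∀ᵐ x ∂μ, φ x ≠ ∞) :
    (∫⁻ x, f x ∂μ) ^ 2 ≤ (∫⁻ x, f x ^ 2 * φ x ∂μ) * ∫⁻ x, (φ x)⁻¹ ∂μ := by
  set s : α → ℝ≥0∞ := fun x ↦ φ x ^ (1 / 2 : ℝ)
  have hs : AEMeasurable s μ := hφ.pow_const _
  have hs_sq (x : α) : s x ^ 2 = φ x := by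
    rw [← ENNReal.rpow_two, ← ENNReal.rpow_mul]; norm_num
  have hf_eq : (fun x ↦ f x) =ᵐ[μ] fun x ↦ f x * s x * (s x)⁻¹ := by
    filter_upwards [hφ_ne_zero, hφ_ne_top] with x h0 htop
    rw [mul_assoc, ENNReal.mul_inv_cancel (by positivity) (by simp [s, htop]), mul_one]
  have hCS :=
    ENNReal.lintegral_mul_le_Lp_mul_Lq μ Real.HolderConjugate.two_two (hf.mul hs) hs.inv
  simp only [Pi.mul_apply, Pi.inv_apply, ENNReal.rpow_two, mul_pow, ← ENNReal.inv_pow,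
    hs_sq] at hCS
  rw [lintegral_congr_ae hf_eq]
  calc _ ≤ ((∫⁻ x, f x ^ 2 * φ x ∂μ) ^ (1 / 2 : ℝ) * (∫⁻ x, (φ x)⁻¹ ∂μ) ^ (1 / 2 : ℝ)) ^ 2 :=
        pow_le_pow_left₀ zero_le hCS 2
    _ = _ := by
        rw [mul_pow, ← ENNReal.rpow_two, ← ENNReal.rpow_two, ← ENNReal.rpow_mul,
          ← ENNReal.rpow_mul]
        norm_num

theorem lintegral_Ioi_rpow_of_lt {a c : ℝ} (ha : a < -1) (hc : 0 < c) :
    ∫⁻ t in Ioi c, ENNReal.ofReal (t ^ a) = ENNReal.ofReal (-c ^ (a + 1) / (a + 1)) := by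
  rw [← integral_Ioi_rpow_of_lt ha hc, ofReal_integral_eq_lintegral_ofReal
    (integrableOn_Ioi_rpow_of_lt ha hc)]
  filter_upwards [ae_restrict_mem measurableSet_Ioi] with t ht
  exact rpow_nonneg (hc.trans ht).le a

theorem lintegral_Ioo_zero_rpow {r x : ℝ} (hr : -1 < r) (hx : 0 ≤ x) :
    ∫⁻ t in Ioo 0 x, ENNReal.ofReal (t ^ r) = ENNReal.ofReal (x ^ (r + 1) / (r + 1)) := by
  have hint : IntegrableOn (fun t : ℝ ↦ t ^ r) (Ioc 0 x) :=
    (intervalIntegrable_iff_integrableOn_Ioc_of_le hx).mp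
      (intervalIntegral.intervalIntegrable_rpow' hr)
  have hprim : ∫ t in (0)..x, t ^ r = x ^ (r + 1) / (r + 1) := by
    rw [integral_rpow (Or.inl hr), zero_rpow (by linarith), sub_zero]
  rw [← hprim, intervalIntegral.integral_of_le hx, ofReal_integral_eq_lintegral_ofReal hint,
    setLIntegral_congr Ioo_ae_eq_Ioc]
  filter_upwards [ae_restrict_mem measurableSet_Ioc] with t ht
  exact rpow_nonneg ht.1.le r

theorem lintegral_Ioi_mul_lintegral_Ioi_eq {F g : ℝ → ℝ≥0∞} (hF : Measurable F)
    (hg : Measurable g) (a : ℝ) :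
    ∫⁻ y in Ioi a, g y * ∫⁻ x in Ioi y, F x = ∫⁻ x in Ioi a, F x * ∫⁻ y in Ioo a x, g y := by
  set k : ℝ → ℝ → ℝ≥0∞ := fun y x ↦ (Ioi a).indicator g y * (Ioi y).indicator F x
  have hk : Measurable (Function.uncurry k) :=
    ((hg.indicator measurableSet_Ioi).comp measurable_fst).mul
      ((hF.comp measurable_snd).indicator (measurableSet_lt measurable_fst measurable_snd))
  have hk_swap (x y : ℝ) : k y x = (Ioi a).indicator F x * (Ioo a x).indicator g y := by
    simp only [k, indicator_apply, mem_Ioi, mem_Ioo]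
    split_ifs <;> grind
  calc ∫⁻ y in Ioi a, g y * ∫⁻ x in Ioi y, F x = ∫⁻ y, ∫⁻ x, k y x := by
        rw [← lintegral_indicator measurableSet_Ioi]
        refine lintegral_congr fun y ↦ ?_
        rw [lintegral_const_mul _ (hF.indicator measurableSet_Ioi),
          lintegral_indicator measurableSet_Ioi]
        by_cases hy : a < y <;> simp [hy]
    _ = ∫⁻ x, ∫⁻ y, k y x := lintegral_lintegral_swap hk.aemeasurable
    _ = ∫⁻ x in Ioi a, F x * ∫⁻ y in Ioo a x, g y := by
        rw [← lintegral_indicator measurableSet_Ioi]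
        refine lintegral_congr fun x ↦ ?_
        simp_rw [hk_swap]
        rw [lintegral_const_mul _ (hg.indicator measurableSet_Ioo),
          lintegral_indicator measurableSet_Ioo]
        by_cases hx : a < x <;> simp [hx]

theorem sq_lintegral_Ioi_le {f : ℝ → ℝ≥0∞} (hf : Measurable f) {w : ℝ → ℝ} (hw : Monotone w)
    (hw_pos : ∀ x, 0 < x → 0 < w x) {β y : ℝ} (hβ : 0 < β) (hy : 0 < y) :
    (∫⁻ x in Ioi y, f x) ^ 2 ≤
      (∫⁻ x in Ioi y, f x ^ 2 * ENNReal.ofReal (x ^ (β + 1) * w x)) *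
        ENNReal.ofReal (y ^ (-β) / (β * w y)) := by
  have hpos : ∀ᵐ x ∂volume.restrict (Ioi y), 0 < x ^ (β + 1) * w x := by
    filter_upwards [ae_restrict_mem measurableSet_Ioi] with x hx
    exact mul_pos (rpow_pos_of_pos (hy.trans hx) _) (hw_pos x (hy.trans hx))
  refine (lintegral_sq_le_lintegral_sq_mul_mul_lintegral_inv hf.aemeasurable
    ((measurable_id.pow_const _).mul hw.measurable).ennreal_ofReal.aemeasurable
    (hpos.mono fun x hx ↦ (ENNReal.ofReal_pos.2 hx).ne')
    (ae_of_all _ fun _ ↦ ENNReal.ofReal_ne_top)).trans (mul_le_mul_right ?_ _)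
  calc ∫⁻ x in Ioi y, (ENNReal.ofReal (x ^ (β + 1) * w x))⁻¹
      ≤ ∫⁻ x in Ioi y, ENNReal.ofReal (w y)⁻¹ * ENNReal.ofReal (x ^ (-(β + 1))) := by
        refine setLIntegral_mono' measurableSet_Ioi fun x hx ↦ ?_
        have hx0 : 0 < x := hy.trans hx
        rw [← ENNReal.ofReal_inv_of_pos (mul_pos (rpow_pos_of_pos hx0 _) (hw_pos x hx0)),
          ← ENNReal.ofReal_mul (inv_nonneg.2 (hw_pos y hy).le), mul_inv, rpow_neg hx0.le,
          mul_comm]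
        gcongr
        exacts [hw_pos y hy, hw hx.le]
    _ = ENNReal.ofReal (y ^ (-β) / (β * w y)) := by
        rw [lintegral_const_mul' _ _ ENNReal.ofReal_ne_top,
          lintegral_Ioi_rpow_of_lt (by linarith) hy,
          ← ENNReal.ofReal_mul (inv_nonneg.2 (hw_pos y hy).le),
          show -(β + 1) + 1 = -β by ring, neg_div_neg_eq]
        field_simp

theorem lintegral_sq_lintegral_Ioi_le {f : ℝ → ℝ≥0∞} (hf : Measurable f) {w : ℝ → ℝ}
    (hw : Monotone w) (hw_pos : ∀ x, 0 < x → 0 < w x) {p : ℝ} (hp : -1 < p) :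
    ∫⁻ y in Ioi 0, (∫⁻ x in Ioi y, f x) ^ 2 * ENNReal.ofReal (y ^ p * w y)
      ≤ ENNReal.ofReal ((2 / (p + 1)) ^ 2) *
        ∫⁻ x in Ioi 0, f x ^ 2 * ENNReal.ofReal (x ^ (p + 2) * w x) := by
  set β : ℝ := (p + 1) / 2 with hβ_def
  have hβ : 0 < β := div_pos (by linarith) two_pos
  set F : ℝ → ℝ≥0∞ := fun x ↦ f x ^ 2 * ENNReal.ofReal (x ^ (β + 1) * w x)
  have hF : Measurable F :=
    (hf.pow_const 2).mul ((measurable_id.pow_const _).mul hw.measurable).ennreal_ofReal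
  have hpointwise : ∀ y ∈ Ioi (0 : ℝ),
      (∫⁻ x in Ioi y, f x) ^ 2 * ENNReal.ofReal (y ^ p * w y)
        ≤ ENNReal.ofReal β⁻¹ * (ENNReal.ofReal (y ^ (β - 1)) * ∫⁻ x in Ioi y, F x) := by
    intro y (hy : 0 < y)
    have hwy := hw_pos y hy
    have hweights : ENNReal.ofReal (y ^ (-β) / (β * w y)) * ENNReal.ofReal (y ^ p * w y)
        = ENNReal.ofReal β⁻¹ * ENNReal.ofReal (y ^ (β - 1)) := by
      rw [← ENNReal.ofReal_mul (by positivity), ← ENNReal.ofReal_mul (by positivity),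
        show β - 1 = -β + p by ring, rpow_add hy]
      field_simp
    calc _ ≤ (∫⁻ x in Ioi y, F x) * ENNReal.ofReal (y ^ (-β) / (β * w y)) *
          ENNReal.ofReal (y ^ p * w y) := by
          gcongr
          exact sq_lintegral_Ioi_le hf hw hw_pos hβ hy
      _ = _ := by rw [mul_assoc, hweights]; ring
  calc ∫⁻ y in Ioi 0, (∫⁻ x in Ioi y, f x) ^ 2 * ENNReal.ofReal (y ^ p * w y)
      ≤ ∫⁻ y in Ioi 0,
          ENNReal.ofReal β⁻¹ * (ENNReal.ofReal (y ^ (β - 1)) * ∫⁻ x in Ioi y, F x) :=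
        setLIntegral_mono' measurableSet_Ioi hpointwise
    _ = ENNReal.ofReal β⁻¹ *
          ∫⁻ x in Ioi 0, F x * ∫⁻ y in Ioo 0 x, ENNReal.ofReal (y ^ (β - 1)) := by
        rw [lintegral_const_mul' _ _ ENNReal.ofReal_ne_top,
          lintegral_Ioi_mul_lintegral_Ioi_eq hF (g := fun y ↦ ENNReal.ofReal (y ^ (β - 1)))
            (measurable_id.pow_const _).ennreal_ofReal]
    _ = ENNReal.ofReal β⁻¹ * ∫⁻ x in Ioi 0,
          ENNReal.ofReal β⁻¹ * (f x ^ 2 * ENNReal.ofReal (x ^ (p + 2) * w x)) := by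
        congr 1
        refine setLIntegral_congr_fun measurableSet_Ioi fun x (hx : 0 < x) ↦ ?_
        have hwx := hw_pos x hx
        have hweights : ENNReal.ofReal (x ^ (β + 1) * w x) *
            ENNReal.ofReal (x ^ (β - 1 + 1) / (β - 1 + 1))
              = ENNReal.ofReal β⁻¹ * ENNReal.ofReal (x ^ (p + 2) * w x) := by
          rw [← ENNReal.ofReal_mul (by positivity), ← ENNReal.ofReal_mul (by positivity),
            sub_add_cancel, show p + 2 = β + 1 + β by ring, rpow_add hx (β + 1) β]
          congr 1
          ring
        rw [lintegral_Ioo_zero_rpow (by linarith) hx.le, mul_assoc, hweights]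
        ring
    _ = _ := by
        rw [lintegral_const_mul' _ _ ENNReal.ofReal_ne_top, ← mul_assoc,
          ← ENNReal.ofReal_mul (by positivity), hβ_def]
        congr 2
        field_simp

theorem integral_le_of_lintegral_enorm_le {α : Type*} [MeasurableSpace α] {μ : Measure α}
    {f : α → ℝ} {b : ℝ} (hb : 0 ≤ b) (h : ∫⁻ x, ‖f x‖ₑ ∂μ ≤ ENNReal.ofReal b) :
    ∫ x, f x ∂μ ≤ b := by
  refine (le_norm_self _).trans ?_
  rw [← toReal_enorm]
  exact ENNReal.toReal_le_of_le_ofReal hb ((enorm_integral_le_lintegral_enorm f).trans h)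

/-- Where `h` is not integrable on `(y, ∞)` the inner integral is the junk value `0`; the bound
`‖∫ h‖ₑ ≤ ∫⁻ ‖h‖ₑ` used here covers that case as well. -/
theorem integral_sq_integral_Ioi_le {h : ℝ → ℝ} (hh : Measurable h) {w : ℝ → ℝ}
    (hw : Monotone w) (hw_pos : ∀ x, 0 < x → 0 < w x) {p : ℝ} (hp : -1 < p)
    (hint : IntegrableOn (fun x ↦ h x ^ 2 * (x ^ (p + 2) * w x)) (Ioi 0)) :
    ∫ y in Ioi 0, (∫ x in Ioi y, h x) ^ 2 * (y ^ p * w y)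
      ≤ (2 / (p + 1)) ^ 2 * ∫ x in Ioi 0, h x ^ 2 * (x ^ (p + 2) * w x) := by
  have hrhs_nonneg : 0 ≤ ∫ x in Ioi 0, h x ^ 2 * (x ^ (p + 2) * w x) :=
    setIntegral_nonneg measurableSet_Ioi fun x (hx : 0 < x) ↦ by
      have := hw_pos x hx
      positivity
  have hrhs : ∫⁻ x in Ioi 0, ‖h x‖ₑ ^ 2 * ENNReal.ofReal (x ^ (p + 2) * w x)
      = ENNReal.ofReal (∫ x in Ioi 0, h x ^ 2 * (x ^ (p + 2) * w x)) := by
    rw [ofReal_integral_eq_lintegral_ofReal hint ?_]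
    · refine lintegral_congr fun x ↦ ?_
      rw [Real.enorm_eq_ofReal_abs, ← ENNReal.ofReal_pow (abs_nonneg _), sq_abs,
        ← ENNReal.ofReal_mul (sq_nonneg _)]
    · filter_upwards [ae_restrict_mem measurableSet_Ioi] with x (hx : 0 < x)
      have := hw_pos x hx
      positivity
  have hlhs : ∀ y ∈ Ioi (0 : ℝ), ‖(∫ x in Ioi y, h x) ^ 2 * (y ^ p * w y)‖ₑ
      ≤ (∫⁻ x in Ioi y, ‖h x‖ₑ) ^ 2 * ENNReal.ofReal (y ^ p * w y) := by
    intro y (hy : 0 < y)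
    have := hw_pos y hy
    rw [enorm_mul, enorm_pow,
      Real.enorm_of_nonneg (r := y ^ p * w y) (by positivity)]
    gcongr
    exact enorm_integral_le_lintegral_enorm h
  refine integral_le_of_lintegral_enorm_le (by positivity) ?_
  calc _ ≤ _ := setLIntegral_mono' measurableSet_Ioi hlhs
    _ ≤ _ := lintegral_sq_lintegral_Ioi_le hh.enorm hw hw_pos hp
    _ = _ := by rw [hrhs, ← ENNReal.ofReal_mul (by positivity)]

theorem hardy_L2_weighted (μ : ℝ) (hμ : 0 ≤ μ) (n : ℕ) (h : ℝ → ℝ)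
    (hmeas : Measurable h)
    (hint : IntegrableOn (fun y => (h y)^2 * y^(2*n+2) * Real.exp (μ*y)) (Ioi 0))
    (H : ℝ → ℝ) (hH : ∀ y, H y = ∫ x in Ioi y, h x) :
    ∫ y in Ioi (0:ℝ), (H y)^2 * y^(2*n) * Real.exp (μ*y)
      ≤ 4 * ∫ y in Ioi (0:ℝ), (h y)^2 * y^(2*n+2) * Real.exp (μ*y) := by
  set p : ℝ := ((2 * n : ℕ) : ℝ)
  have hp : 0 ≤ p := Nat.cast_nonneg _
  have hexp : Monotone fun y ↦ exp (μ * y) := fun _ _ hxy ↦ exp_le_exp.2 (by gcongr)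
  have hlhs (y : ℝ) :
      (H y)^2 * y^(2*n) * exp (μ*y) = (∫ x in Ioi y, h x) ^ 2 * (y ^ p * exp (μ * y)) := by
    rw [hH, rpow_natCast, mul_assoc]
  have hrhs (x : ℝ) :
      (h x)^2 * x^(2*n+2) * exp (μ*x) = h x ^ 2 * (x ^ (p + 2) * exp (μ * x)) := by
    rw [show p + 2 = ((2 * n + 2 : ℕ) : ℝ) by simp only [p]; push_cast; ring, rpow_natCast,
      mul_assoc]
  have hconst : (2 / (p + 1)) ^ 2 ≤ 4 := by
    rw [div_pow, div_le_iff₀ (by positivity)]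
    nlinarith
  simp_rw [hlhs, hrhs] at hint ⊢
  calc _ ≤ (2 / (p + 1)) ^ 2 * ∫ x in Ioi 0, h x ^ 2 * (x ^ (p + 2) * exp (μ * x)) :=
        integral_sq_integral_Ioi_le hmeas hexp (fun y _ ↦ exp_pos _) (by linarith) hint
    _ ≤ _ := by
      gcongr
      exact setIntegral_nonneg measurableSet_Ioi fun x (hx : 0 < x) ↦ by positivity
end

section
/- Let μ > 0 and h ∈ L²((0,∞), e^{μy} dy). Define H(y) = ∫_y^∞ h(x) dx. Then ∫₀^∞ H(y)² e^{μy} dy ≤ (4/μ²) ∫₀^∞ h(y)² e^{μy} dy. -/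
/-!
With `c = μ / 2`, Cauchy–Schwarz against the weight `e^{c x}` gives the pointwise bound
`H(y)² e^{c y} ≤ c⁻¹ ∫_y^∞ h² e^{c x} dx`. Multiplying by `e^{c y}`, integrating over `y > 0` and
exchanging the order of integration, the inner integral `∫_0^x e^{c y} dy ≤ e^{c x} / c` produces
the constant `c⁻² = 4 / μ²`. Everything is done with lower Lebesgue integrals, so no
integrability of `H` is ever needed.
-/

open MeasureTheory Real Set
open scoped ENNReal

theorem ENNReal.sq_lintegral_mul_le {α : Type*} [MeasurableSpace α] (ν : Measure α)
    {f g : α → ℝ≥0∞} (hf : AEMeasurable f ν) (hg : AEMeasurable g ν) :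
    (∫⁻ a, f a * g a ∂ν) ^ 2 ≤ (∫⁻ a, f a ^ 2 ∂ν) * ∫⁻ a, g a ^ 2 ∂ν := by
  have sq_rpow_half (z : ℝ≥0∞) : (z ^ (1 / 2 : ℝ)) ^ 2 = z := by
    rw [← ENNReal.rpow_natCast, ← ENNReal.rpow_mul]; norm_num
  have holder := ENNReal.lintegral_mul_le_Lp_mul_Lq ν Real.HolderConjugate.two_two hf hg
  simp only [ENNReal.rpow_two, Pi.mul_apply] at holder
  calc (∫⁻ a, f a * g a ∂ν) ^ 2
      ≤ ((∫⁻ a, f a ^ 2 ∂ν) ^ (1 / 2 : ℝ) * (∫⁻ a, g a ^ 2 ∂ν) ^ (1 / 2 : ℝ)) ^ 2 := by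
        gcongr
    _ = _ := by rw [mul_pow, sq_rpow_half, sq_rpow_half]

theorem ofReal_integral_le_lintegral_ofReal {α : Type*} [MeasurableSpace α] {ν : Measure α}
    {f : α → ℝ} (hf : ∀ a, 0 ≤ f a) :
    ENNReal.ofReal (∫ a, f a ∂ν) ≤ ∫⁻ a, ENNReal.ofReal (f a) ∂ν := by
  calc ENNReal.ofReal (∫ a, f a ∂ν) = ‖∫ a, f a ∂ν‖ₑ := by
        rw [Real.enorm_eq_ofReal (integral_nonneg hf)]
    _ ≤ ∫⁻ a, ‖f a‖ₑ ∂ν := enorm_integral_le_lintegral_enorm f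
    _ = ∫⁻ a, ENNReal.ofReal (f a) ∂ν := by simp only [Real.enorm_eq_ofReal (hf _)]

theorem lintegral_ofReal_exp_mul_Iic {a : ℝ} (ha : 0 < a) (c : ℝ) :
    ∫⁻ x in Iic c, ENNReal.ofReal (exp (a * x)) = ENNReal.ofReal (exp (a * c) / a) := by
  rw [← ofReal_integral_eq_lintegral_ofReal (integrableOn_exp_mul_Iic ha c)
    (ae_of_all _ fun _ => (exp_pos _).le), integral_exp_mul_Iic ha]

theorem lintegral_ofReal_exp_mul_Ioi {a : ℝ} (ha : a < 0) (c : ℝ) :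
    ∫⁻ x in Ioi c, ENNReal.ofReal (exp (a * x)) = ENNReal.ofReal (-exp (a * c) / a) := by
  rw [← ofReal_integral_eq_lintegral_ofReal (integrableOn_exp_mul_Ioi ha c)
    (ae_of_all _ fun _ => (exp_pos _).le), integral_exp_mul_Ioi ha]

theorem setLIntegral_Ioi_mul_lintegral_Ioi {w G : ℝ → ℝ≥0∞} (hw : Measurable w)
    (hG : Measurable G) (a : ℝ) :
    ∫⁻ y in Ioi a, w y * ∫⁻ x in Ioi y, G x = ∫⁻ x in Ioi a, G x * ∫⁻ y in Ioo a x, w y := by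
  set K : ℝ → ℝ → ℝ≥0∞ := fun y x => if y < x then w y * G x else 0
  have hK : Measurable (Function.uncurry K) :=
    Measurable.ite (measurableSet_lt measurable_fst measurable_snd)
      ((hw.comp measurable_fst).mul (hG.comp measurable_snd)) measurable_const
  calc ∫⁻ y in Ioi a, w y * ∫⁻ x in Ioi y, G x = ∫⁻ y in Ioi a, ∫⁻ x in Ioi a, K y x := by
        refine setLIntegral_congr_fun measurableSet_Ioi fun y (hy : a < y) => ?_
        have hK_y : K y = (Ioi y).indicator fun x => w y * G x := by
          ext x; simp [K, indicator_apply]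
        rw [hK_y, lintegral_indicator measurableSet_Ioi,
          Measure.restrict_restrict measurableSet_Ioi, Ioi_inter_Ioi, sup_eq_left.2 hy.le, lintegral_const_mul _ hG]
    _ = ∫⁻ x in Ioi a, ∫⁻ y in Ioi a, K y x := lintegral_lintegral_swap hK.aemeasurable
    _ = ∫⁻ x in Ioi a, G x * ∫⁻ y in Ioo a x, w y := by
        refine setLIntegral_congr_fun measurableSet_Ioi fun x _ => ?_
        have hK_x : (fun y => K y x) = (Iio x).indicator fun y => G x * w y := by
          ext y; simp [K, indicator_apply, mul_comm]
        rw [hK_x, lintegral_indicator measurableSet_Iio,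
          Measure.restrict_restrict measurableSet_Iio, Iio_inter_Ioi, lintegral_const_mul _ hw]

theorem ofReal_sq_integral_Ioi_mul_exp_le {h : ℝ → ℝ} (hmeas : Measurable h) {c : ℝ}
    (hc : 0 < c) (y : ℝ) :
    ENNReal.ofReal ((∫ x in Ioi y, h x) ^ 2 * exp (c * y))
      ≤ ENNReal.ofReal c⁻¹ * ∫⁻ x in Ioi y, ENNReal.ofReal (h x ^ 2 * exp (c * x)) := by
  set f : ℝ → ℝ≥0∞ := fun x => ‖h x‖ₑ * ENNReal.ofReal (exp (c / 2 * x))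
  set g : ℝ → ℝ≥0∞ := fun x => ENNReal.ofReal (exp (-(c / 2) * x))
  have hf : Measurable f := hmeas.enorm.mul (by fun_prop)
  have hg : Measurable g := by fun_prop
  have hfg (x : ℝ) : ‖h x‖ₑ = f x * g x := by
    rw [mul_assoc, ← ENNReal.ofReal_mul (exp_pos _).le, ← exp_add]
    simp
  have hf_sq (x : ℝ) : f x ^ 2 = ENNReal.ofReal (h x ^ 2 * exp (c * x)) := by
    rw [mul_pow, Real.enorm_eq_ofReal_abs, ← ENNReal.ofReal_pow (abs_nonneg _),
      ← ENNReal.ofReal_pow (exp_pos _).le, ← ENNReal.ofReal_mul (by positivity), sq_abs,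
      ← exp_nat_mul]
    ring_nf
  have hg_sq (x : ℝ) : g x ^ 2 = ENNReal.ofReal (exp (-c * x)) := by
    rw [← ENNReal.ofReal_pow (exp_pos _).le, ← exp_nat_mul]
    ring_nf
  have cauchy_schwarz : ENNReal.ofReal ((∫ x in Ioi y, h x) ^ 2)
      ≤ (∫⁻ x in Ioi y, ENNReal.ofReal (h x ^ 2 * exp (c * x)))
        * ENNReal.ofReal (exp (-c * y) / c) := by
    calc ENNReal.ofReal ((∫ x in Ioi y, h x) ^ 2) = ‖∫ x in Ioi y, h x‖ₑ ^ 2 := by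
          rw [Real.enorm_eq_ofReal_abs, ← ENNReal.ofReal_pow (abs_nonneg _), sq_abs]
      _ ≤ (∫⁻ x in Ioi y, f x * g x) ^ 2 := by
          simp only [← hfg]; gcongr; exact enorm_integral_le_lintegral_enorm h
      _ ≤ (∫⁻ x in Ioi y, f x ^ 2) * ∫⁻ x in Ioi y, g x ^ 2 :=
          ENNReal.sq_lintegral_mul_le _ hf.aemeasurable hg.aemeasurable
      _ = _ := by
          simp only [hf_sq, hg_sq]
          rw [lintegral_ofReal_exp_mul_Ioi (neg_lt_zero.2 hc), neg_div_neg_eq]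
  calc ENNReal.ofReal ((∫ x in Ioi y, h x) ^ 2 * exp (c * y))
      = ENNReal.ofReal ((∫ x in Ioi y, h x) ^ 2) * ENNReal.ofReal (exp (c * y)) :=
        ENNReal.ofReal_mul (sq_nonneg _)
    _ ≤ (∫⁻ x in Ioi y, ENNReal.ofReal (h x ^ 2 * exp (c * x)))
        * ENNReal.ofReal (exp (-c * y) / c) * ENNReal.ofReal (exp (c * y)) := by
        gcongr
    _ = _ := by
        rw [mul_assoc, ← ENNReal.ofReal_mul (by positivity), mul_comm, div_mul_eq_mul_div,
          ← exp_add, neg_mul, neg_add_cancel, exp_zero, one_div]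

theorem setLIntegral_sq_integral_Ioi_mul_exp_le {h : ℝ → ℝ} (hmeas : Measurable h) {μ : ℝ}
    (hμ : 0 < μ) (a : ℝ) :
    ∫⁻ y in Ioi a, ENNReal.ofReal ((∫ x in Ioi y, h x) ^ 2 * exp (μ * y))
      ≤ ENNReal.ofReal (4 / μ ^ 2) * ∫⁻ y in Ioi a, ENNReal.ofReal (h y ^ 2 * exp (μ * y)) := by
  obtain ⟨c, rfl⟩ : ∃ c, μ = 2 * c := ⟨μ / 2, by ring⟩
  have hc : 0 < c := by linarith
  set w : ℝ → ℝ≥0∞ := fun y => ENNReal.ofReal (exp (c * y))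
  set G : ℝ → ℝ≥0∞ := fun x => ENNReal.ofReal (h x ^ 2 * exp (c * x))
  have hw : Measurable w := by fun_prop
  have hG : Measurable G := by fun_prop
  have hw_split (y : ℝ) : exp (2 * c * y) = exp (c * y) * exp (c * y) := by
    rw [← exp_add]; ring_nf
  have hG_mul_w (x : ℝ) : G x * ENNReal.ofReal (exp (c * x) / c)
      = ENNReal.ofReal c⁻¹ * ENNReal.ofReal (h x ^ 2 * exp (2 * c * x)) := by
    rw [← ENNReal.ofReal_mul (by positivity), ← ENNReal.ofReal_mul (by positivity), hw_split]
    ring_nf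
  calc ∫⁻ y in Ioi a, ENNReal.ofReal ((∫ x in Ioi y, h x) ^ 2 * exp (2 * c * y))
      ≤ ∫⁻ y in Ioi a, ENNReal.ofReal c⁻¹ * (w y * ∫⁻ x in Ioi y, G x) := by
        refine lintegral_mono fun y => ?_
        rw [hw_split, ← mul_assoc, ENNReal.ofReal_mul (by positivity), mul_left_comm, mul_comm]
        gcongr
        exact ofReal_sq_integral_Ioi_mul_exp_le hmeas hc y
    _ = ENNReal.ofReal c⁻¹ * ∫⁻ x in Ioi a, G x * ∫⁻ y in Ioo a x, w y := by
        rw [lintegral_const_mul' _ _ ENNReal.ofReal_ne_top,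
          setLIntegral_Ioi_mul_lintegral_Ioi hw hG]
    _ ≤ ENNReal.ofReal c⁻¹ * ∫⁻ x in Ioi a, G x * ENNReal.ofReal (exp (c * x) / c) := by
        gcongr with x
        rw [← lintegral_ofReal_exp_mul_Iic hc x]
        exact lintegral_mono_set (Ioo_subset_Iio_self.trans Iio_subset_Iic_self)
    _ = _ := by
        simp only [hG_mul_w]
        rw [lintegral_const_mul' _ _ ENNReal.ofReal_ne_top, ← mul_assoc,
          ← ENNReal.ofReal_mul (by positivity)]
        congr 2
        field_simp
        ring

theorem weighted_poincare (μ : ℝ) (hμ : 0 < μ) (h : ℝ → ℝ)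
    (hmeas : Measurable h)
    (hint : IntegrableOn (fun y => (h y)^2 * Real.exp (μ*y)) (Ioi 0))
    (H : ℝ → ℝ) (hH : ∀ y, H y = ∫ x in Ioi y, h x) :
    ∫ y in Ioi (0:ℝ), (H y)^2 * Real.exp (μ*y)
      ≤ (4/μ^2) * ∫ y in Ioi (0:ℝ), (h y)^2 * Real.exp (μ*y) := by
  have hRHS_nonneg : 0 ≤ (4 / μ ^ 2) * ∫ y in Ioi (0:ℝ), h y ^ 2 * exp (μ * y) :=
    mul_nonneg (by positivity) (setIntegral_nonneg measurableSet_Ioi fun _ _ => by positivity)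
  rw [← ENNReal.ofReal_le_ofReal_iff hRHS_nonneg]
  calc ENNReal.ofReal (∫ y in Ioi (0:ℝ), H y ^ 2 * exp (μ * y))
      ≤ ∫⁻ y in Ioi (0:ℝ), ENNReal.ofReal (H y ^ 2 * exp (μ * y)) :=
        ofReal_integral_le_lintegral_ofReal fun _ => by positivity
    _ ≤ ENNReal.ofReal (4 / μ ^ 2) * ∫⁻ y in Ioi (0:ℝ), ENNReal.ofReal (h y ^ 2 * exp (μ * y)) := by
        simp only [hH]
        exact setLIntegral_sq_integral_Ioi_mul_exp_le hmeas hμ 0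
    _ = ENNReal.ofReal ((4 / μ ^ 2) * ∫ y in Ioi (0:ℝ), h y ^ 2 * exp (μ * y)) := by
        rw [ENNReal.ofReal_mul (by positivity), ofReal_integral_eq_lintegral_ofReal hint
          (ae_of_all _ fun _ => by positivity)]
end

section
/- Let g, h ∈ L¹(0,∞) and define the coagulation operator C(g,h)(y) = (1/2)∫₀^y g(x)h(y−x) dx − (1/2) g(y)∫₀^∞ h − (1/2) h(y)∫₀^∞ g, and tail primitive H(y) = ∫_y^∞ h(x) dx. Then for every y > 0, 2 ∫_y^∞ C(g,h)(x) dx = ∫₀^y g(x) H(y−x) dx − H(y) ∫₀^∞ g(x) dx. -/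
open MeasureTheory Real Set

/-- The constant-kernel coagulation bilinear operator. -/
noncomputable def coagOp (g h : ℝ → ℝ) (y : ℝ) : ℝ :=
  (1/2) * (∫ x in (0:ℝ)..y, g x * h (y-x))
    - (1/2) * g y * (∫ x in Ioi (0:ℝ), h x)
    - (1/2) * h y * (∫ x in Ioi (0:ℝ), g x)

/-!
Extend `g` and `h` by zero to `g₀`, `h₀` on the whole line. For `x > 0` the integral in `coagOp`
is the convolution `(g₀ ⋆ h₀) x`, and Fubini with translation invariance gives
`∫_{x > y} (g₀ ⋆ h₀) x = ∫ g₀ t * H₀ (y - t) dt`, where `H₀ s = ∫_{x > max s 0} h`. Splitting at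
`t = y`, this is `∫₀^y g t * H (y - t) dt + (∫_{t > y} g) * ∫_{x > 0} h`, and the second term cancels
the loss term `g * ∫ h` of `coagOp`.
-/

open scoped Convolution

theorem setIntegral_Ioi_comp_sub {E : Type*} [NormedAddCommGroup E] [NormedSpace ℝ E]
    (f : ℝ → E) (y t : ℝ) : ∫ x in Ioi y, f (x - t) = ∫ x in Ioi (y - t), f x := by
  have := (measurePreserving_sub_right volume t).setIntegral_preimage_emb
    (measurableEmbedding_subRight t) f (Ioi (y - t))
  rwa [preimage_sub_const_Ioi, sub_add_cancel] at this

theorem setIntegral_Ioi_indicator_Ioi {E : Type*} [NormedAddCommGroup E] [NormedSpace ℝ E]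
    (f : ℝ → E) (a s : ℝ) : ∫ x in Ioi s, (Ioi a).indicator f x = ∫ x in Ioi (max s a), f x := by
  rw [setIntegral_indicator measurableSet_Ioi, Ioi_inter_Ioi]

section
variable {f k : ℝ → ℝ}

theorem integrable_convolution_integrand_restrict_prod (hf : Integrable f) (hk : Integrable k)
    (s : Set ℝ) :
    Integrable (fun p : ℝ × ℝ => f p.2 * k (p.1 - p.2)) ((volume.restrict s).prod volume) := by
  rw [Measure.restrict_prod_eq_prod_univ]
  exact (hf.convolution_integrand (ContinuousLinearMap.mul ℝ ℝ) hk).integrableOn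

theorem setIntegral_convolution_mul (hf : Integrable f) (hk : Integrable k) (s : Set ℝ) :
    ∫ x in s, (f ⋆[ContinuousLinearMap.mul ℝ ℝ] k) x = ∫ t, f t * ∫ x in s, k (x - t) := by
  simp only [convolution_mul, ← integral_const_mul]
  exact integral_integral_swap (integrable_convolution_integrand_restrict_prod hf hk s)

theorem integrable_mul_setIntegral_comp_sub (hf : Integrable f) (hk : Integrable k) (s : Set ℝ) :
    Integrable fun t => f t * ∫ x in s, k (x - t) := by
  simpa only [integral_const_mul] using
    (integrable_convolution_integrand_restrict_prod hf hk s).integral_prod_right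

end

section
variable {g h : ℝ → ℝ}

theorem indicator_Ioi_mul_indicator_Ioi_sub (x : ℝ) :
    (fun t => (Ioi 0).indicator g t * (Ioi 0).indicator h (x - t))
      = (Ioo 0 x).indicator fun t => g t * h (x - t) := by
  ext t
  by_cases ht : t ∈ Ioo 0 x
  · rw [indicator_of_mem ht, indicator_of_mem (mem_Ioi.2 ht.1),
      indicator_of_mem (mem_Ioi.2 (sub_pos.2 ht.2))]
  · rw [indicator_of_notMem ht]
    rcases le_or_gt t 0 with ht0 | ht0
    · rw [indicator_of_notMem (notMem_Ioi.2 ht0), zero_mul]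
    · rw [indicator_of_notMem (notMem_Ioi.2 (sub_nonpos.2 (le_of_not_gt fun hx => ht ⟨ht0, hx⟩))),
        mul_zero]

theorem convolution_indicator_Ioi_eq_intervalIntegral {x : ℝ} (hx : 0 ≤ x) :
    ((Ioi 0).indicator g ⋆[ContinuousLinearMap.mul ℝ ℝ] (Ioi 0).indicator h) x
      = ∫ t in 0..x, g t * h (x - t) := by
  rw [convolution_mul, indicator_Ioi_mul_indicator_Ioi_sub, integral_indicator measurableSet_Ioo,
    intervalIntegral.integral_of_le hx, integral_Ioc_eq_integral_Ioo]

theorem setIntegral_Ioi_convolution_indicator_Ioi (hg : IntegrableOn g (Ioi 0))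
    (hh : IntegrableOn h (Ioi 0)) {y : ℝ} (hy : 0 ≤ y) :
    ∫ x in Ioi y, ((Ioi 0).indicator g ⋆[ContinuousLinearMap.mul ℝ ℝ] (Ioi 0).indicator h) x
      = (∫ t in 0..y, g t * ∫ x in Ioi (y - t), h x)
        + (∫ t in Ioi y, g t) * ∫ x in Ioi 0, h x := by
  have hg₀ := (integrable_indicator_iff measurableSet_Ioi).2 hg
  have hh₀ := (integrable_indicator_iff measurableSet_Ioi).2 hh
  set φ : ℝ → ℝ := fun t => g t * ∫ x in Ioi (max (y - t) 0), h x
  have hφ₀ : (fun t => (Ioi 0).indicator g t * ∫ x in Ioi (y - t), (Ioi 0).indicator h x)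
      = (Ioi 0).indicator φ := by
    ext t
    rw [setIntegral_Ioi_indicator_Ioi, indicator_mul_left]
  have hφ : IntegrableOn φ (Ioi 0) := by
    have := integrable_mul_setIntegral_comp_sub hg₀ hh₀ (Ioi y)
    simp only [setIntegral_Ioi_comp_sub] at this
    rwa [hφ₀, integrable_indicator_iff measurableSet_Ioi] at this
  rw [setIntegral_convolution_mul hg₀ hh₀]
  simp only [setIntegral_Ioi_comp_sub]
  rw [hφ₀, integral_indicator measurableSet_Ioi,
    ← intervalIntegral.integral_interval_add_Ioi hφ (hφ.mono_set (Ioi_subset_Ioi hy)),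
    ← integral_mul_const]
  congr 1
  · refine intervalIntegral.integral_congr fun t ht => ?_
    rw [uIcc_of_le hy] at ht
    simp only [φ, max_eq_left (sub_nonneg.2 ht.2)]
  · refine setIntegral_congr_fun measurableSet_Ioi fun t ht => ?_
    simp only [φ, max_eq_right (sub_nonpos.2 (mem_Ioi.1 ht).le)]

theorem two_mul_setIntegral_Ioi_coagOp (hg : IntegrableOn g (Ioi 0))
    (hh : IntegrableOn h (Ioi 0)) {y : ℝ} (hy : 0 ≤ y) :
    2 * ∫ x in Ioi y, coagOp g h x
      = (∫ x in Ioi y, ((Ioi 0).indicator g ⋆[ContinuousLinearMap.mul ℝ ℝ] (Ioi 0).indicator h) x)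
        - (∫ x in Ioi y, g x) * (∫ x in Ioi 0, h x) - (∫ x in Ioi y, h x) * ∫ x in Ioi 0, g x := by
  set conv := (Ioi 0).indicator g ⋆[ContinuousLinearMap.mul ℝ ℝ] (Ioi 0).indicator h
  have hconv : IntegrableOn conv (Ioi y) :=
    ((integrable_indicator_iff measurableSet_Ioi).2 hg).integrable_convolution _
      ((integrable_indicator_iff measurableSet_Ioi).2 hh) |>.integrableOn
  have hgy := (hg.mono_set (Ioi_subset_Ioi hy)).mul_const (∫ x in Ioi 0, h x)
  have hhy := (hh.mono_set (Ioi_subset_Ioi hy)).mul_const (∫ x in Ioi 0, g x)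
  have hcoag : EqOn (coagOp g h)
      (fun x => 1 / 2 * (conv x - g x * (∫ x in Ioi 0, h x) - h x * ∫ x in Ioi 0, g x)) (Ioi y) :=
    fun x hx => by
      simp only [coagOp, conv,
        convolution_indicator_Ioi_eq_intervalIntegral (hy.trans (mem_Ioi.1 hx).le)]
      ring
  rw [setIntegral_congr_fun measurableSet_Ioi hcoag, integral_const_mul, integral_sub ?_ hhy,
    integral_sub hconv hgy, integral_mul_const, integral_mul_const]
  · ring
  · exact hconv.sub hgy

end

theorem primitive_coagOp (g h : ℝ → ℝ)
    (hg : IntegrableOn g (Ioi 0)) (hh : IntegrableOn h (Ioi 0))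
    (H : ℝ → ℝ) (hH : ∀ y, H y = ∫ x in Ioi y, h x) :
    ∀ y > (0:ℝ),
      2 * (∫ x in Ioi y, coagOp g h x)
        = (∫ x in (0:ℝ)..y, g x * H (y-x)) - H y * (∫ x in Ioi (0:ℝ), g x) := by
  intro y hy
  simp only [hH]
  rw [two_mul_setIntegral_Ioi_coagOp hg hh hy.le,
    setIntegral_Ioi_convolution_indicator_Ioi hg hh hy.le]
  ring
end

section
/- Fix ρ > 0 and let g_ρ(y) = (4/ρ) e^{−2y/ρ}. For h a C¹ function with compact support in (0,∞), define Lh(y) = 2h(y) + y h'(y) + 2C(g_ρ, h)(y), where C is the constant-kernel coagulation bilinear operator, and let H(y) = ∫_y^∞ h. Then for every y > 0, ∫_y^∞ Lh(x) dx = −H(y) − y h(y) + (g_ρ * H)(y), where (g_ρ * H)(y) = ∫₀^y g_ρ(x) H(y−x) dx. -/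
/-!
Since `∫₀^∞ g_ρ = 2`, the terms `2h` cancel and `Lh = x h' + g_ρ * h - g_ρ H(0)`. With `H' = -h`
the convolution satisfies `(g_ρ * H)' = g_ρ H(0) - g_ρ * h`: for the exponential kernel this
follows from `(g * f)(x) = g(x) ∫₀^x e^{bt} f(t) dt` and an integration by parts. Hence
`T(y) = -H(y) - y h(y) + (g_ρ * H)(y)` satisfies `T' = -Lh`. Beyond the support of `h` both `T`
and `Lh` are multiples of `e^{-2y/ρ}`, so `T → 0` and `Lh` is integrable on `(y, ∞)`, and the
identity is the fundamental theorem of calculus there.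
-/

open MeasureTheory Real Set

open Filter Topology Asymptotics

noncomputable def halfLineConv (g f : ℝ → ℝ) (x : ℝ) : ℝ :=
  ∫ t in (0:ℝ)..x, g t * f (x - t)

noncomputable def tailIntegral (f : ℝ → ℝ) (x : ℝ) : ℝ :=
  ∫ t in Ioi x, f t

section ExpKernel

variable {b c : ℝ} {g : ℝ → ℝ}

lemma mul_exp_eq_of_exp_kernel (hg : ∀ t, g t = c * exp (-b * t)) (x : ℝ) :
    g x * exp (b * x) = c := by
  rw [hg, mul_assoc, ← exp_add, neg_mul, neg_add_cancel, exp_zero, mul_one]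

lemma hasDerivAt_of_exp_kernel (hg : ∀ t, g t = c * exp (-b * t)) (x : ℝ) :
    HasDerivAt g (-b * g x) x := by
  rw [funext hg]
  refine (((hasDerivAt_id x).const_mul (-b)).exp.const_mul c).congr_deriv ?_
  simp only [id]
  ring

lemma integral_Ioi_zero_of_exp_kernel (hb : 0 < b) (hg : ∀ t, g t = c * exp (-b * t)) :
    ∫ x in Ioi 0, g x = c / b := by
  simp only [hg, integral_const_mul, integral_exp_mul_Ioi (neg_lt_zero.2 hb), mul_zero, exp_zero]
  field_simp

lemma halfLineConv_eq_of_exp_kernel (hg : ∀ t, g t = c * exp (-b * t)) (f : ℝ → ℝ) (x : ℝ) :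
    halfLineConv g f x = g x * ∫ t in (0:ℝ)..x, exp (b * t) * f t := by
  have hsub := intervalIntegral.integral_comp_sub_left (fun t => g (x - t) * f t) x
    (a := 0) (b := x)
  simp only [sub_sub_cancel, sub_zero, sub_self] at hsub
  rw [halfLineConv, hsub, ← intervalIntegral.integral_const_mul]
  refine intervalIntegral.integral_congr fun t _ => ?_
  rw [hg, hg, show -b * (x - t) = -b * x + b * t by ring, exp_add]
  ring

lemma hasDerivAt_halfLineConv_of_exp_kernel_of_continuous (hg : ∀ t, g t = c * exp (-b * t))
    {f : ℝ → ℝ} (hf : Continuous f) (x : ℝ) :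
    HasDerivAt (halfLineConv g f) (c * f x - b * halfLineConv g f x) x := by
  have hF : HasDerivAt (fun x => ∫ t in (0:ℝ)..x, exp (b * t) * f t) (exp (b * x) * f x) x :=
    ((by fun_prop : Continuous fun t => exp (b * t) * f t).integral_hasStrictDerivAt
      0 x).hasDerivAt
  rw [funext (halfLineConv_eq_of_exp_kernel hg f)]
  refine ((hasDerivAt_of_exp_kernel hg x).mul hF).congr_deriv ?_
  linear_combination f x * mul_exp_eq_of_exp_kernel hg x

lemma continuous_halfLineConv_of_exp_kernel (hg : ∀ t, g t = c * exp (-b * t))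
    {f : ℝ → ℝ} (hf : Continuous f) : Continuous (halfLineConv g f) :=
  continuous_iff_continuousAt.2 fun x =>
    (hasDerivAt_halfLineConv_of_exp_kernel_of_continuous hg hf x).continuousAt

lemma mul_halfLineConv_of_exp_kernel (hg : ∀ t, g t = c * exp (-b * t))
    {f f' : ℝ → ℝ} (hf : ∀ t, HasDerivAt f (f' t) t) (hf' : Continuous f') (x : ℝ) :
    b * halfLineConv g f x = c * f x - g x * f 0 - halfLineConv g f' x := by
  have hexp : ∀ t, HasDerivAt (fun t => exp (b * t)) (exp (b * t) * b) t := fun t => by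
    simpa using ((hasDerivAt_id t).const_mul b).exp
  have ibp := intervalIntegral.integral_mul_deriv_eq_deriv_mul (a := 0) (b := x)
    (fun t _ => hf t) (fun t _ => hexp t) (hf'.intervalIntegrable _ _)
    ((by fun_prop : Continuous fun t => exp (b * t) * b).intervalIntegrable _ _)
  have hI : ∫ t in (0:ℝ)..x, f t * (exp (b * t) * b)
      = b * ∫ t in (0:ℝ)..x, exp (b * t) * f t := by
    rw [← intervalIntegral.integral_const_mul]
    congr 1 with t
    ring
  simp only [hI, mul_zero, exp_zero, mul_one, mul_comm (f' _)] at ibp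
  simp only [halfLineConv_eq_of_exp_kernel hg]
  linear_combination g x * ibp + f x * mul_exp_eq_of_exp_kernel hg x

lemma hasDerivAt_halfLineConv_of_exp_kernel (hg : ∀ t, g t = c * exp (-b * t))
    {f f' : ℝ → ℝ} (hf : ∀ t, HasDerivAt f (f' t) t) (hf' : Continuous f') (x : ℝ) :
    HasDerivAt (halfLineConv g f) (g x * f 0 + halfLineConv g f' x) x := by
  have hfc : Continuous f := continuous_iff_continuousAt.2 fun t => (hf t).continuousAt
  refine (hasDerivAt_halfLineConv_of_exp_kernel_of_continuous hg hfc x).congr_deriv ?_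
  linear_combination -mul_halfLineConv_of_exp_kernel hg hf hf' x

lemma halfLineConv_eventuallyEq_of_exp_kernel (hg : ∀ t, g t = c * exp (-b * t))
    {f : ℝ → ℝ} (hf : Continuous f) (hf0 : f =ᶠ[atTop] 0) :
    ∃ C, halfLineConv g f =ᶠ[atTop] fun x => C * exp (-b * x) := by
  obtain ⟨R, hR⟩ := eventually_atTop.1 hf0
  have hint : ∀ u v : ℝ, IntervalIntegrable (fun t => exp (b * t) * f t) volume u v :=
    fun _ _ => (by fun_prop : Continuous fun t => exp (b * t) * f t).intervalIntegrable _ _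
  refine ⟨c * ∫ t in (0:ℝ)..R, exp (b * t) * f t, ?_⟩
  filter_upwards [eventually_ge_atTop R] with x hx
  have htail : ∫ t in R..x, exp (b * t) * f t = 0 := by
    refine intervalIntegral.integral_zero_ae (ae_of_all _ fun t ht => ?_)
    rw [uIoc_of_le hx] at ht
    simp [hR t ht.1.le]
  rw [halfLineConv_eq_of_exp_kernel hg, ← intervalIntegral.integral_add_adjacent_intervals
    (hint 0 R) (hint R x), htail, add_zero, hg]
  ring

lemma tendsto_halfLineConv_of_exp_kernel (hb : 0 < b) (hg : ∀ t, g t = c * exp (-b * t))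
    {f : ℝ → ℝ} (hf : Continuous f) (hf0 : f =ᶠ[atTop] 0) :
    Tendsto (halfLineConv g f) atTop (𝓝 0) := by
  obtain ⟨C, hC⟩ := halfLineConv_eventuallyEq_of_exp_kernel hg hf hf0
  refine Tendsto.congr' hC.symm ?_
  simpa using (tendsto_exp_atBot.comp
    (tendsto_id.const_mul_atTop_of_neg (neg_lt_zero.2 hb))).const_mul C

lemma isBigO_halfLineConv_of_exp_kernel (hg : ∀ t, g t = c * exp (-b * t))
    {f : ℝ → ℝ} (hf : Continuous f) (hf0 : f =ᶠ[atTop] 0) :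
    halfLineConv g f =O[atTop] fun x => exp (-b * x) := by
  obtain ⟨C, hC⟩ := halfLineConv_eventuallyEq_of_exp_kernel hg hf hf0
  exact hC.trans_isBigO ((isBigO_refl _ _).const_mul_left C)

end ExpKernel

lemma HasCompactSupport.eventuallyEq_zero_atTop {f : ℝ → ℝ} (hf : HasCompactSupport f) :
    f =ᶠ[atTop] 0 :=
  (hasCompactSupport_iff_eventuallyEq.1 hf).filter_mono
    (coclosedCompact_eq_cocompact (X := ℝ) ▸ atTop_le_cocompact)

section TailIntegral

variable {f : ℝ → ℝ}

lemma hasDerivAt_tailIntegral (hf : Continuous f) (hint : Integrable f) (x : ℝ) :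
    HasDerivAt (tailIntegral f) (-f x) x := by
  have hsplit : tailIntegral f = fun x => (∫ t in x..0, f t) + ∫ t in Ioi 0, f t :=
    funext fun x => (intervalIntegral.integral_interval_add_Ioi hint.integrableOn
      hint.integrableOn).symm
  rw [hsplit]
  exact (intervalIntegral.integral_hasDerivAt_left (hf.intervalIntegrable _ _)
    (hf.stronglyMeasurableAtFilter _ _) hf.continuousAt).add_const _

lemma tailIntegral_eventuallyEq_zero (hf0 : f =ᶠ[atTop] 0) : tailIntegral f =ᶠ[atTop] 0 := by
  obtain ⟨R, hR⟩ := eventually_atTop.1 hf0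
  filter_upwards [eventually_ge_atTop R] with x hx
  exact setIntegral_eq_zero_of_forall_eq_zero fun t ht => hR t (hx.trans (le_of_lt ht))

end TailIntegral

noncomputable def linearizedOp (g h : ℝ → ℝ) (x : ℝ) : ℝ :=
  2 * h x + x * deriv h x + 2 * coagOp g h x

noncomputable def linearizedOpTail (g h : ℝ → ℝ) (y : ℝ) : ℝ :=
  -tailIntegral h y - y * h y + halfLineConv g (tailIntegral h) y

section LinearizedOp

variable {b : ℝ} {g h : ℝ → ℝ}

lemma linearizedOp_eq_of_exp_kernel (hb : 0 < b) (hg : ∀ t, g t = 2 * b * exp (-b * t))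
    (x : ℝ) :
    linearizedOp g h x = x * deriv h x + halfLineConv g h x - g x * tailIntegral h 0 := by
  rw [linearizedOp, coagOp, integral_Ioi_zero_of_exp_kernel hb hg, tailIntegral, halfLineConv]
  field_simp
  ring

lemma hasDerivAt_linearizedOpTail (hb : 0 < b) (hg : ∀ t, g t = 2 * b * exp (-b * t))
    (hh : ContDiff ℝ 1 h) (hint : Integrable h) (x : ℝ) :
    HasDerivAt (linearizedOpTail g h) (-linearizedOp g h x) x := by
  have hcont := hh.continuous
  have hH := hasDerivAt_tailIntegral hcont hint
  have hK := hasDerivAt_halfLineConv_of_exp_kernel hg hH hcont.neg x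
  have hxh := (hasDerivAt_id x).mul ((hh.differentiable one_ne_zero) x).hasDerivAt
  refine (((hH x).neg.sub hxh).add hK).congr_deriv ?_
  simp only [linearizedOp_eq_of_exp_kernel hb hg, halfLineConv, mul_neg,
    intervalIntegral.integral_neg, id]
  ring

lemma tendsto_linearizedOpTail {c : ℝ} (hb : 0 < b) (hg : ∀ t, g t = c * exp (-b * t))
    (hh : Continuous h) (hcs : HasCompactSupport h) :
    Tendsto (linearizedOpTail g h) atTop (𝓝 0) := by
  have hh0 := hcs.eventuallyEq_zero_atTop
  have hH0 := tailIntegral_eventuallyEq_zero hh0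
  have hHc : Continuous (tailIntegral h) := continuous_iff_continuousAt.2 fun x =>
    (hasDerivAt_tailIntegral hh (hh.integrable_of_hasCompactSupport hcs) x).continuousAt
  have hlocal : Tendsto (fun y => -tailIntegral h y - y * h y) atTop (𝓝 0) :=
    tendsto_const_nhds.congr' (by filter_upwards [hH0, hh0] with x h1 h2; simp [h1, h2])
  have hT := hlocal.add (tendsto_halfLineConv_of_exp_kernel hb hg hHc hH0)
  rwa [add_zero] at hT

lemma integrableOn_linearizedOp (hb : 0 < b) (hg : ∀ t, g t = 2 * b * exp (-b * t))
    (hh : ContDiff ℝ 1 h) (hcs : HasCompactSupport h) (y : ℝ) :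
    IntegrableOn (linearizedOp g h) (Ioi y) := by
  have hcont := hh.continuous
  have hh' := hh.continuous_deriv le_rfl
  have hgc : Continuous g := by rw [funext hg]; fun_prop
  have hKc := continuous_halfLineConv_of_exp_kernel hg hcont
  rw [funext (linearizedOp_eq_of_exp_kernel hb hg)]
  refine integrable_of_isBigO_exp_neg hb (by fun_prop : Continuous _).continuousOn ?_
  refine ((IsBigO.add ?_ (isBigO_halfLineConv_of_exp_kernel hg hcont
    hcs.eventuallyEq_zero_atTop))).sub ?_
  · exact (hcs.deriv.mul_left (f := id)).eventuallyEq_zero_atTop.trans_isBigO (isBigO_zero _ _)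
  · simp only [hg, mul_comm _ (tailIntegral h 0), ← mul_assoc]
    exact (isBigO_refl _ _).const_mul_left _

theorem integral_Ioi_linearizedOp (hb : 0 < b) (hg : ∀ t, g t = 2 * b * exp (-b * t))
    (hh : ContDiff ℝ 1 h) (hcs : HasCompactSupport h) (y : ℝ) :
    ∫ x in Ioi y, linearizedOp g h x = linearizedOpTail g h y := by
  have hT := hasDerivAt_linearizedOpTail hb hg hh
    (hh.continuous.integrable_of_hasCompactSupport hcs)
  have hFTC := integral_Ioi_of_hasDerivAt_of_tendsto (hT y).continuousAt.continuousWithinAt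
    (fun x _ => hT x) (integrableOn_linearizedOp hb hg hh hcs y).neg
    (tendsto_linearizedOpTail hb hg hh.continuous hcs)
  rwa [integral_neg, zero_sub, neg_inj] at hFTC

end LinearizedOp

theorem primitive_linearized_op_general (ρ : ℝ) (hρ : 0 < ρ)
    (gρ : ℝ → ℝ) (hgρ : ∀ y, gρ y = (4/ρ) * Real.exp (-2*y/ρ))
    (h : ℝ → ℝ) (hC1 : ContDiff ℝ 1 h) (hcs : HasCompactSupport h)
    (H : ℝ → ℝ) (hH : ∀ y, H y = ∫ x in Ioi y, h x)
    (Lh : ℝ → ℝ)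
    (hLh : ∀ y, Lh y = 2 * h y + y * deriv h y + 2 * coagOp gρ h y) :
    ∀ y > (0:ℝ),
      (∫ x in Ioi y, Lh x)
        = -H y - y * h y + ∫ x in (0:ℝ)..y, gρ x * H (y-x) := by
  intro y _
  have hg : ∀ t, gρ t = 2 * (2 / ρ) * exp (-(2 / ρ) * t) := fun t => by rw [hgρ]; ring_nf
  obtain rfl : H = tailIntegral h := funext hH
  obtain rfl : Lh = linearizedOp gρ h := funext hLh
  exact integral_Ioi_linearizedOp (by positivity) hg hC1 hcs y

theorem primitive_linearized_op (ρ : ℝ) (hρ : 0 < ρ)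
    (gρ : ℝ → ℝ) (hgρ : ∀ y, gρ y = (4/ρ) * Real.exp (-2*y/ρ))
    (h : ℝ → ℝ) (hC1 : ContDiff ℝ 1 h) (hcs : HasCompactSupport h)
    (hsupp : tsupport h ⊆ Ioi 0)
    (H : ℝ → ℝ) (hH : ∀ y, H y = ∫ x in Ioi y, h x)
    (Lh : ℝ → ℝ)
    (hLh : ∀ y, Lh y = 2 * h y + y * deriv h y + 2 * coagOp gρ h y) :
    ∀ y > (0:ℝ),
      (∫ x in Ioi y, Lh x)
        = -H y - y * h y + ∫ x in (0:ℝ)..y, gρ x * H (y-x) :=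
  primitive_linearized_op_general ρ hρ gρ hgρ h hC1 hcs H hH Lh hLh
end

section
/- Fix ρ > 0, g_ρ(y) = (4/ρ)e^{−2y/ρ}, and let 0 < μ < 4/ρ. For h ∈ L¹(0,∞) with H(y) = ∫_y^∞ h and ∫₀^∞ H(y)² e^{μy} dy < ∞, define C(g_ρ,h) via its tail primitive 2∫_y^∞ C(g_ρ,h) = (g_ρ*H)(y) − 2H(y). Then ‖C(g_ρ,h)‖_{−1,μ} ≤ (∫₀^∞ g_ρ(y) e^{μy/2} dy) · ‖h‖_{−1,μ}, where ‖h‖²_{−1,μ} = ∫₀^∞ H(y)² e^{μy} dy. -/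
/-! Write `w(y) = e^{μy/2}`. Since `w(y) = w(x) w(y - x)`, the weighted truncated convolution
`w · (g_ρ * H)` is dominated pointwise by the convolution of `w g_ρ` with `w H` (both extended by
zero to the negative half-line), so Young's inequality `‖K ⋆ F‖₂ ≤ ‖K‖₁ ‖F‖₂` bounds its weighted
`L²` norm by `A ‖h‖_{−1,μ}`, where `A = ∫₀^∞ g_ρ w = 8 / (4 - μρ)`. The triangle inequality then
gives `‖C(g_ρ,h)‖_{−1,μ} ≤ (A / 2 + 1) ‖h‖_{−1,μ}`, and `A / 2 + 1 ≤ A` because `A ≥ 2`. -/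

open MeasureTheory Real Set
open scoped ENNReal NNReal

theorem sq_lintegral_mul_le {α : Type*} [MeasurableSpace α] (μ : Measure α) {K F : α → ℝ≥0∞}
    (hK : Measurable K) (hF : Measurable F) :
    (∫⁻ a, K a * F a ∂μ) ^ 2 ≤ (∫⁻ a, K a ∂μ) * ∫⁻ a, K a * F a ^ 2 ∂μ := by
  have hCS : ∫⁻ a, F a ∂μ.withDensity K ≤
      (∫⁻ _, 1 ∂μ.withDensity K) ^ (1 / 2 : ℝ) *
        (∫⁻ a, F a ^ 2 ∂μ.withDensity K) ^ (1 / 2 : ℝ) := by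
    simpa [ENNReal.rpow_two] using ENNReal.lintegral_mul_le_Lp_mul_Lq (μ.withDensity K)
      Real.HolderConjugate.two_two aemeasurable_const hF.aemeasurable (f := fun _ => 1)
  rw [lintegral_withDensity_eq_lintegral_mul _ hK hF, lintegral_withDensity_eq_lintegral_mul _ hK
    measurable_const, lintegral_withDensity_eq_lintegral_mul _ hK (hF.pow_const 2)] at hCS
  calc _ ≤ _ := pow_le_pow_left₀ zero_le hCS 2
    _ = _ := by
      rw [mul_pow, ← ENNReal.rpow_natCast, ← ENNReal.rpow_natCast, ← ENNReal.rpow_mul,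
        ← ENNReal.rpow_mul]
      norm_num

section LpTwo

variable {α : Type*} [MeasurableSpace α] {μ : Measure α}

theorem sq_eLpNorm_two {ε : Type*} [ENorm ε] (f : α → ε) :
    eLpNorm f 2 μ ^ 2 = ∫⁻ a, ‖f a‖ₑ ^ 2 ∂μ := by
  simpa [ENNReal.rpow_two] using eLpNorm_nnreal_pow_eq_lintegral (μ := μ) (f := f) (p := 2)
    two_ne_zero

theorem eLpNorm_coe_mul_le (c : ℝ≥0) (f : α → ℝ≥0∞) (p : ℝ≥0∞) :
    eLpNorm (fun a => (c : ℝ≥0∞) * f a) p μ ≤ c * eLpNorm f p μ :=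
  eLpNorm_le_nnreal_smul_eLpNorm_of_ae_le_mul' (ae_of_all _ fun a => by simp [enorm_eq_self]) p

theorem eLpNorm_two_eq_ofReal_sqrt_integral {f : α → ℝ} (hf : Integrable (fun a => f a ^ 2) μ) :
    eLpNorm f 2 μ = ENNReal.ofReal √(∫ a, f a ^ 2 ∂μ) := by
  refine ENNReal.rpow_left_injective (x := 2) two_ne_zero ?_
  simp only [ENNReal.rpow_two, sq_eLpNorm_two, Real.enorm_eq_ofReal_abs]
  rw [← ENNReal.ofReal_pow (Real.sqrt_nonneg _),
    Real.sq_sqrt (integral_nonneg fun a => sq_nonneg _),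
    ofReal_integral_eq_lintegral_ofReal hf (ae_of_all _ fun a => sq_nonneg _)]
  simp_rw [← ENNReal.ofReal_pow (abs_nonneg _), sq_abs]

theorem sqrt_integral_sq_le_toReal_eLpNorm (f : α → ℝ) :
    √(∫ a, f a ^ 2 ∂μ) ≤ (eLpNorm f 2 μ).toReal := by
  by_cases hf : Integrable (fun a => f a ^ 2) μ
  · rw [eLpNorm_two_eq_ofReal_sqrt_integral hf, ENNReal.toReal_ofReal (Real.sqrt_nonneg _)]
  · rw [integral_undef hf, Real.sqrt_zero]
    exact ENNReal.toReal_nonneg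

end LpTwo

section Young

variable {G : Type*} [MeasurableSpace G] [AddGroup G] [MeasurableAdd₂ G] [MeasurableNeg G]
  (μ : Measure G) [SFinite μ] [μ.IsAddLeftInvariant]

theorem lintegral_sq_lconvolution_le {K F : G → ℝ≥0∞} (hK : Measurable K) (hF : Measurable F) :
    ∫⁻ y, (K ⋆ₗ[μ] F) y ^ 2 ∂μ ≤ (∫⁻ x, K x ∂μ) ^ 2 * ∫⁻ y, F y ^ 2 ∂μ := by
  have hmeas : Measurable fun p : G × G => K p.2 * F (-p.2 + p.1) ^ 2 := by fun_prop
  calc ∫⁻ y, (K ⋆ₗ[μ] F) y ^ 2 ∂μ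
      ≤ ∫⁻ y, (∫⁻ x, K x ∂μ) * ∫⁻ x, K x * F (-x + y) ^ 2 ∂μ ∂μ :=
        lintegral_mono fun y => sq_lintegral_mul_le μ hK (by fun_prop)
    _ = (∫⁻ x, K x ∂μ) * ∫⁻ x, ∫⁻ y, K x * F (-x + y) ^ 2 ∂μ ∂μ := by
        rw [lintegral_const_mul _ hmeas.lintegral_prod_right',
          lintegral_lintegral_swap hmeas.aemeasurable]
    _ = (∫⁻ x, K x ∂μ) * ∫⁻ x, K x * ∫⁻ y, F y ^ 2 ∂μ ∂μ := by
        congr 1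
        refine lintegral_congr fun x => ?_
        rw [lintegral_const_mul _ (by fun_prop), lintegral_add_left_eq_self (fun y => F y ^ 2)]
    _ = _ := by rw [lintegral_mul_const _ hK]; ring

theorem eLpNorm_lconvolution_le {K F : G → ℝ≥0∞} (hK : Measurable K) (hF : Measurable F) :
    eLpNorm (K ⋆ₗ[μ] F) 2 μ ≤ (∫⁻ x, K x ∂μ) * eLpNorm F 2 μ := by
  rw [← ENNReal.pow_le_pow_left_iff two_ne_zero, mul_pow, sq_eLpNorm_two, sq_eLpNorm_two]
  simpa only [enorm_eq_self] using lintegral_sq_lconvolution_le μ hK hF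

end Young

noncomputable def weightedENorm (μ : ℝ) (f : ℝ → ℝ) : ℝ → ℝ≥0∞ :=
  (Ici 0).indicator fun x => ‖f x * exp (μ * x / 2)‖ₑ

section Weighted

variable {μ : ℝ} {f g H : ℝ → ℝ}

theorem measurable_weightedENorm (hf : ContinuousOn f (Ici 0)) :
    Measurable (weightedENorm μ f) := by
  have hw : Continuous fun x : ℝ => exp (μ * x / 2) := by fun_prop
  exact ContinuousOn.measurable_piecewise (hf.mul hw.continuousOn).enorm continuousOn_const
    measurableSet_Ici

theorem eLpNorm_weightedENorm (μ : ℝ) (f : ℝ → ℝ) :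
    eLpNorm (weightedENorm μ f) 2 volume =
      eLpNorm (fun y => f y * exp (μ * y / 2)) 2 (volume.restrict (Ioi 0)) := by
  rw [weightedENorm, eLpNorm_indicator_eq_eLpNorm_restrict measurableSet_Ici, eLpNorm_enorm,
    Measure.restrict_congr_set Ioi_ae_eq_Ici]

theorem lintegral_weightedENorm (hf : IntegrableOn (fun x => f x * exp (μ * x / 2)) (Ioi 0))
    (hf0 : ∀ x ∈ Ioi 0, 0 ≤ f x) :
    ∫⁻ x, weightedENorm μ f x = ENNReal.ofReal (∫ x in Ioi 0, f x * exp (μ * x / 2)) := by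
  rw [weightedENorm, lintegral_indicator measurableSet_Ici,
    ← Measure.restrict_congr_set Ioi_ae_eq_Ici, ← ofReal_integral_norm_eq_lintegral_enorm hf]
  congr 1
  refine setIntegral_congr_fun measurableSet_Ioi fun x hx => ?_
  simp only [Real.norm_eq_abs, abs_of_nonneg (mul_nonneg (hf0 x hx) (exp_pos _).le)]

theorem sq_mul_exp_eq (f : ℝ → ℝ) :
    (fun y => f y ^ 2 * exp (μ * y)) = fun y => (f y * exp (μ * y / 2)) ^ 2 := by
  ext y; rw [mul_pow, ← exp_nat_mul]; ring_nf

theorem eLpNorm_mul_exp_eq_ofReal_sqrt_integral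
    (hf : IntegrableOn (fun y => f y ^ 2 * exp (μ * y)) (Ioi 0)) :
    eLpNorm (fun y => f y * exp (μ * y / 2)) 2 (volume.restrict (Ioi 0)) =
      ENNReal.ofReal √(∫ y in Ioi 0, f y ^ 2 * exp (μ * y)) := by
  rw [sq_mul_exp_eq] at hf ⊢
  exact eLpNorm_two_eq_ofReal_sqrt_integral hf

theorem sqrt_integral_sq_mul_exp_le_toReal_eLpNorm (f : ℝ → ℝ) :
    √(∫ y in Ioi 0, f y ^ 2 * exp (μ * y)) ≤
      (eLpNorm (fun y => f y * exp (μ * y / 2)) 2 (volume.restrict (Ioi 0))).toReal := by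
  rw [sq_mul_exp_eq]
  exact sqrt_integral_sq_le_toReal_eLpNorm _

theorem enorm_integral_mul_sub_mul_exp_le_lconvolution {y : ℝ} (hy : 0 ≤ y) :
    ‖(∫ x in 0..y, g x * H (y - x)) * exp (μ * y / 2)‖ₑ ≤
      (weightedENorm μ g ⋆ₗ weightedENorm μ H) y := by
  rw [← intervalIntegral.integral_mul_const, intervalIntegral.integral_of_le hy]
  calc _ ≤ ∫⁻ x in Ioc 0 y, ‖g x * H (y - x) * exp (μ * y / 2)‖ₑ :=
        enorm_integral_le_lintegral_enorm _
    _ = ∫⁻ x in Ioc 0 y, weightedENorm μ g x * weightedENorm μ H (-x + y) := by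
        refine setLIntegral_congr_fun measurableSet_Ioc fun x hx => ?_
        rw [weightedENorm, weightedENorm, indicator_of_mem (mem_Ici.2 hx.1.le),
          indicator_of_mem (mem_Ici.2 (by linarith [hx.2])), ← enorm_mul, neg_add_eq_sub]
        have hexp : exp (μ * y / 2) = exp (μ * x / 2) * exp (μ * (y - x) / 2) := by
          rw [← exp_add]; ring_nf
        rw [hexp]; ring_nf
    _ ≤ _ := setLIntegral_le_lintegral _ _

theorem enorm_half_conv_sub_mul_exp_le {y : ℝ} (hy : 0 ≤ y) :
    ‖((∫ x in 0..y, g x * H (y - x)) - 2 * H y) / 2 * exp (μ * y / 2)‖ₑ ≤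
      2⁻¹ * (weightedENorm μ g ⋆ₗ weightedENorm μ H) y + weightedENorm μ H y := by
  have hsplit : ((∫ x in 0..y, g x * H (y - x)) - 2 * H y) / 2 * exp (μ * y / 2) =
      2⁻¹ * ((∫ x in 0..y, g x * H (y - x)) * exp (μ * y / 2)) - H y * exp (μ * y / 2) := by
    ring
  have hHy : weightedENorm μ H y = ‖H y * exp (μ * y / 2)‖ₑ := indicator_of_mem (mem_Ici.2 hy) _
  rw [hsplit, hHy]
  refine enorm_sub_le.trans (add_le_add_left ?_ _)
  rw [enorm_mul]
  gcongr
  · rw [Real.enorm_eq_ofReal (by norm_num), ENNReal.ofReal_inv_of_pos two_pos,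
      ENNReal.ofReal_ofNat]
  · exact enorm_integral_mul_sub_mul_exp_le_lconvolution hy

theorem eLpNorm_half_conv_sub_le (hg : ContinuousOn g (Ici 0)) (hH : ContinuousOn H (Ici 0))
    (hg2 : 2 ≤ ∫⁻ x, weightedENorm μ g x) :
    eLpNorm (fun y => ((∫ x in 0..y, g x * H (y - x)) - 2 * H y) / 2 * exp (μ * y / 2)) 2
        (volume.restrict (Ioi 0)) ≤
      (∫⁻ x, weightedENorm μ g x) *
        eLpNorm (fun y => H y * exp (μ * y / 2)) 2 (volume.restrict (Ioi 0)) := by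
  set a := ∫⁻ x, weightedENorm μ g x
  set T := weightedENorm μ g ⋆ₗ weightedENorm μ H
  set N := eLpNorm (weightedENorm μ H) 2 volume
  have hgm := measurable_weightedENorm (μ := μ) hg
  have hHm := measurable_weightedENorm (μ := μ) hH
  have hTm : Measurable T := measurable_lconvolution _ hgm hHm
  have ha : 2⁻¹ * a + 1 ≤ a := by
    have h1 : 1 ≤ 2⁻¹ * a := by
      rwa [← ENNReal.div_eq_inv_mul, ENNReal.le_div_iff_mul_le (by simp) (by simp), one_mul]
    calc 2⁻¹ * a + 1 ≤ 2⁻¹ * a + 2⁻¹ * a := by gcongr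
      _ = a := by rw [← add_mul, ENNReal.inv_two_add_inv_two, one_mul]
  calc _ ≤ eLpNorm (fun y => 2⁻¹ * T y + weightedENorm μ H y) 2 (volume.restrict (Ioi 0)) :=
        eLpNorm_mono_enorm_ae <| (ae_restrict_iff' measurableSet_Ioi).2 <|
          ae_of_all _ fun y hy => enorm_half_conv_sub_mul_exp_le (le_of_lt hy)
    _ ≤ eLpNorm (fun y => 2⁻¹ * T y + weightedENorm μ H y) 2 volume :=
        eLpNorm_mono_measure _ Measure.restrict_le_self
    _ ≤ eLpNorm (fun y => 2⁻¹ * T y) 2 volume + N :=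
        eLpNorm_add_le (hTm.const_mul _).aestronglyMeasurable hHm.aestronglyMeasurable one_le_two
    _ ≤ 2⁻¹ * (a * N) + N := by
        gcongr
        have hhalf := eLpNorm_coe_mul_le (μ := volume) 2⁻¹ T 2
        rw [ENNReal.coe_inv two_ne_zero, ENNReal.coe_ofNat] at hhalf
        exact hhalf.trans (by gcongr; exact eLpNorm_lconvolution_le _ hgm hHm)
    _ = (2⁻¹ * a + 1) * N := by ring
    _ ≤ a * N := by gcongr
    _ = _ := by rw [← eLpNorm_weightedENorm]

end Weighted

section Kernel

variable {ρ μ : ℝ}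

theorem kernel_mul_exp_eq (x : ℝ) :
    4 / ρ * exp (-2 * x / ρ) * exp (μ * x / 2) = 4 / ρ * exp ((μ / 2 - 2 / ρ) * x) := by
  rw [mul_assoc, ← exp_add]; ring_nf

theorem integrableOn_kernel_mul_exp (hμ : μ < 4 / ρ) :
    IntegrableOn (fun x => 4 / ρ * exp (-2 * x / ρ) * exp (μ * x / 2)) (Ioi 0) := by
  simp_rw [kernel_mul_exp_eq]
  exact (integrableOn_exp_mul_Ioi (by linarith [show 4 / ρ = 2 * (2 / ρ) by ring]) 0).const_mul _

theorem integral_kernel_mul_exp (hρ : 0 < ρ) (hμ : μ < 4 / ρ) :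
    ∫ x in Ioi 0, 4 / ρ * exp (-2 * x / ρ) * exp (μ * x / 2) = 8 / (4 - μ * ρ) := by
  have hμρ : 4 - μ * ρ ≠ 0 := by linarith [(lt_div_iff₀ hρ).1 hμ]
  simp_rw [kernel_mul_exp_eq]
  rw [integral_const_mul, integral_exp_mul_Ioi (by linarith [show 4 / ρ = 2 * (2 / ρ) by ring]) 0,
    mul_zero, exp_zero, show μ / 2 - 2 / ρ = -(4 - μ * ρ) / (2 * ρ) by field_simp; ring]
  field_simp
  ring

theorem lintegral_weightedENorm_kernel (hρ : 0 < ρ) (hμ : μ < 4 / ρ) :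
    ∫⁻ x, weightedENorm μ (fun y => 4 / ρ * exp (-2 * y / ρ)) x =
      ENNReal.ofReal (8 / (4 - μ * ρ)) := by
  rw [lintegral_weightedENorm (integrableOn_kernel_mul_exp hμ) fun x _ => by positivity,
    integral_kernel_mul_exp hρ hμ]

end Kernel

theorem linear_coag_bounded_minus_one (ρ : ℝ) (hρ : 0 < ρ) (μ : ℝ)
    (hμ : 0 < μ) (hμ' : μ < 4/ρ)
    (gρ : ℝ → ℝ) (hgρ : ∀ y, gρ y = (4/ρ) * Real.exp (-2*y/ρ))
    (h : ℝ → ℝ) (hh : IntegrableOn h (Ioi 0))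
    (H : ℝ → ℝ) (hH : ∀ y, H y = ∫ x in Ioi y, h x)
    (hHint : IntegrableOn (fun y => (H y)^2 * Real.exp (μ*y)) (Ioi 0))
    (CP : ℝ → ℝ)
    (hCP : ∀ y, CP y = ((∫ x in (0:ℝ)..y, gρ x * H (y-x)) - 2 * H y) / 2) :
    Real.sqrt (∫ y in Ioi (0:ℝ), (CP y)^2 * Real.exp (μ*y))
      ≤ (∫ y in Ioi (0:ℝ), gρ y * Real.exp (μ*y/2))
          * Real.sqrt (∫ y in Ioi (0:ℝ), (H y)^2 * Real.exp (μ*y)) := by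
  have hg : gρ = fun y => 4 / ρ * exp (-2 * y / ρ) := funext hgρ
  have hμρ : μ * ρ < 4 := (lt_div_iff₀ hρ).1 hμ'
  have hA : ∫⁻ x, weightedENorm μ gρ x = ENNReal.ofReal (8 / (4 - μ * ρ)) := by
    rw [hg, lintegral_weightedENorm_kernel hρ hμ']
  have hA2 : 2 ≤ ∫⁻ x, weightedENorm μ gρ x := by
    rw [hA, ← ENNReal.ofReal_ofNat 2]
    exact ENNReal.ofReal_le_ofReal ((le_div_iff₀ (by linarith)).2 (by nlinarith))
  have hHcont : ContinuousOn H (Ici 0) := by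
    rw [show H = _ from funext hH]
    exact hh.continuousOn_Ici_primitive_Ioi
  have key := eLpNorm_half_conv_sub_le (by rw [hg]; fun_prop) hHcont hA2
  simp_rw [← hCP] at key
  rw [hA, eLpNorm_mul_exp_eq_ofReal_sqrt_integral hHint,
    ← ENNReal.ofReal_mul (div_nonneg (by norm_num) (by linarith))] at key
  rw [hg, integral_kernel_mul_exp hρ hμ']
  exact (sqrt_integral_sq_mul_exp_le_toReal_eLpNorm CP).trans
    (ENNReal.toReal_le_of_le_ofReal (by positivity) key)
end

section
/- Let φ₀ : ℝ → ℂ satisfy φ₀(0) = 2, |φ₀(x) − 2| ≤ 2|x| and |(φ₀(x)−2)/x + 2i| ≤ (M₂/2)|x| for some M₂ > 0. Set ε₁ = min{1/4, 1/M₂}. Then for all τ > 1 and μ ∈ ℝ with |μ/τ| ≤ ε₁, writing x = μ/τ, one has |2 + (τ−1)(2 − φ₀(x))| ≥ (1/2)(1 + |μ|). -/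
open Real Set

/-!
Subtracting the linearization `2iμ` of `(τ - 1)(2 - φ₀(x))` splits the denominator into
`2 + 2iμ`, of modulus at least `1 + |μ|`, minus `(τ - 1) R(x) + 2ix`, where the remainder
`R(x) = φ₀(x) - 2 + 2ix` is `O(M₂ x²)`. Since `τ|x| = |μ|`, the condition `M₂|x| ≤ 1` bounds the
perturbation by `|μ|/2 + 3|x|/2`, and `|x| ≤ 1/4` leaves at least `(1 + |μ|)/2`.
-/

open Complex

theorem norm_sub_add_mul_le_of_norm_div_le {φ : ℝ → ℂ} {a c : ℂ} {C : ℝ} (h0 : φ 0 = a)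
    (h : ∀ x : ℝ, x ≠ 0 → ‖(φ x - a) / (x : ℂ) + c‖ ≤ C * |x|) (x : ℝ) :
    ‖φ x - a + c * x‖ ≤ C * x ^ 2 := by
  rcases eq_or_ne x 0 with rfl | hx
  · simp [h0]
  · have hxC : (x : ℂ) ≠ 0 := ofReal_ne_zero.mpr hx
    have hfactor : φ x - a + c * x = ((φ x - a) / x + c) * x := by field_simp
    rw [hfactor, norm_mul, norm_real, Real.norm_eq_abs, ← sq_abs x, sq, ← mul_assoc]
    exact mul_le_mul_of_nonneg_right (h x hx) (abs_nonneg x)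

theorem one_add_abs_le_norm_two_add_two_mul_I (μ : ℝ) : 1 + |μ| ≤ ‖2 + 2 * I * μ‖ := by
  have hre := abs_re_le_norm (2 + 2 * I * μ)
  have him := abs_im_le_norm (2 + 2 * I * μ)
  simp only [add_re, add_im, mul_re, mul_im, I_re, I_im, ofReal_re, ofReal_im] at hre him
  norm_num [abs_mul] at hre him
  linarith

theorem two_add_mul_two_sub_eq (τ μ : ℝ) (hτ : τ ≠ 0) (z : ℂ) :
    2 + ((τ : ℂ) - 1) * (2 - z) = (2 + 2 * I * μ)
      - (((τ : ℂ) - 1) * (z - 2 + 2 * I * (μ / τ : ℝ)) + 2 * I * (μ / τ : ℝ)) := by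
  have hτC : (τ : ℂ) ≠ 0 := ofReal_ne_zero.mpr hτ
  push_cast
  field_simp
  ring

theorem norm_mul_add_two_mul_I_le {τ μ M : ℝ} {E : ℂ} (hτ : 1 < τ)
    (hE : ‖E‖ ≤ M / 2 * (μ / τ) ^ 2) (hM : M * |μ / τ| ≤ 1) (hx : |μ / τ| ≤ 1 / 4) :
    ‖((τ : ℂ) - 1) * E + 2 * I * (μ / τ : ℝ)‖ ≤ |μ| / 2 + 3 / 8 := by
  set x := μ / τ with hxdef
  have hτx : (τ - 1) * |x| = |μ| - |x| := by
    rw [hxdef, abs_div, abs_of_pos (by linarith : (0 : ℝ) < τ)]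
    field_simp
  have hEx : ‖E‖ ≤ |x| / 2 := by
    rw [← sq_abs] at hE
    nlinarith [abs_nonneg x]
  calc ‖((τ : ℂ) - 1) * E + 2 * I * (x : ℝ)‖
      ≤ (τ - 1) * ‖E‖ + 2 * |x| := by
        refine (norm_add_le _ _).trans (le_of_eq ?_)
        rw [norm_mul, norm_mul, norm_mul, ← ofReal_one, ← ofReal_sub, norm_real, norm_real,
          Real.norm_of_nonneg (by linarith), Real.norm_eq_abs, norm_I]
        norm_num
    _ ≤ (τ - 1) * (|x| / 2) + 2 * |x| := by gcongr
    _ ≤ |μ| / 2 + 3 / 8 := by linarith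

theorem mul_abs_le_one_of_abs_le_one_div {M x : ℝ} (h : |x| ≤ 1 / M) : M * |x| ≤ 1 := by
  rcases le_or_gt M 0 with hM | hM
  · nlinarith [abs_nonneg x]
  · rwa [le_div_iff₀ hM, mul_comm] at h

theorem denominator_lower_bound_general (φ₀ : ℝ → ℂ) (M₂ : ℝ)
    (h0 : φ₀ 0 = 2)
    (h2 : ∀ x : ℝ, x ≠ 0 → ‖(φ₀ x - 2)/(x:ℂ) + 2*Complex.I‖ ≤ (M₂/2) * |x|)
    (ε₁ : ℝ) (hε₁ : ε₁ = min (1/4) (1/M₂)) :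
    ∀ τ : ℝ, 1 < τ → ∀ μ : ℝ, |μ/τ| ≤ ε₁ →
      (1/2) * (1 + |μ|) ≤ ‖(2:ℂ) + ((τ:ℂ) - 1) * (2 - φ₀ (μ/τ))‖ := by
  intro τ hτ μ hμ
  rw [hε₁, le_min_iff] at hμ
  obtain ⟨hx, hxM⟩ := hμ
  have hpert := norm_mul_add_two_mul_I_le hτ (norm_sub_add_mul_le_of_norm_div_le h0 h2 (μ / τ))
    (mul_abs_le_one_of_abs_le_one_div hxM) hx
  rw [two_add_mul_two_sub_eq τ μ (by linarith)]
  calc (1 / 2) * (1 + |μ|) ≤ (1 + |μ|) - (|μ| / 2 + 3 / 8) := by linarith [abs_nonneg μ]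
    _ ≤ _ := sub_le_sub (one_add_abs_le_norm_two_add_two_mul_I μ) hpert
    _ ≤ _ := norm_sub_norm_le _ _

theorem denominator_lower_bound (φ₀ : ℝ → ℂ) (M₂ : ℝ) (hM₂ : 0 < M₂)
    (h0 : φ₀ 0 = 2)
    (h1 : ∀ x : ℝ, ‖φ₀ x - 2‖ ≤ 2 * |x|)
    (h2 : ∀ x : ℝ, x ≠ 0 → ‖(φ₀ x - 2)/(x:ℂ) + 2*Complex.I‖ ≤ (M₂/2) * |x|)
    (ε₁ : ℝ) (hε₁ : ε₁ = min (1/4) (1/M₂)) :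
    ∀ τ : ℝ, 1 < τ → ∀ μ : ℝ, |μ/τ| ≤ ε₁ →
      (1/2) * (1 + |μ|) ≤ ‖(2:ℂ) + ((τ:ℂ) - 1) * (2 - φ₀ (μ/τ))‖ :=
  denominator_lower_bound_general φ₀ M₂ h0 h2 ε₁ hε₁
end
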